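/- arXiv:0712.2913 — 2 statements merged into one kernel-verified Lean document; each statement's English description precedes it below -/
import Mathlib

section
/- (Failure of C⁰-rigidity for multiple brackets.) For every n ≥ 1 there exists N ∈ ℕ, depending only on n, with the following property: for any functions F_1, …, F_N ∈ C_c^∞(ℝ^{2n}) and any ε > 0, there exist F'_1, …, F'_N ∈ C_c^∞(ℝ^{2n}) with ‖F'_i − F_i‖ < ε for all i such that the iterated Poisson bracket vanishes identically: {F'_1, {F'_2, …, {F'_{N−1}, F'_N}…}} ≡ 0. -/
/-- The phase space `ℝ^{2n} = ℝ^n × ℝ^n` with coordinates `(p, q)`. -/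
abbrev Phase (n : ℕ) := (Fin n → ℝ) × (Fin n → ℝ)

/-- Partial derivative `∂F/∂p_i`. -/
noncomputable def pderivP {n : ℕ} (F : Phase n → ℝ) (i : Fin n) (x : Phase n) : ℝ :=
  fderiv ℝ F x (Pi.single i 1, 0)

/-- Partial derivative `∂F/∂q_i`. -/
noncomputable def pderivQ {n : ℕ} (F : Phase n → ℝ) (i : Fin n) (x : Phase n) : ℝ :=
  fderiv ℝ F x (0, Pi.single i 1)

/-- The standard Poisson bracket
`{F,G} = Σ i, (∂F/∂q_i · ∂G/∂p_i − ∂F/∂p_i · ∂G/∂q_i)`. -/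
noncomputable def poisson {n : ℕ} (F G : Phase n → ℝ) (x : Phase n) : ℝ :=
  ∑ i : Fin n, (pderivQ F i x * pderivP G i x - pderivP F i x * pderivQ G i x)

/-- `F ∈ C_c^∞(ℝ^{2n})`: smooth and compactly supported. -/
def SmoothCpt {n : ℕ} (F : Phase n → ℝ) : Prop :=
  ContDiff ℝ (⊤ : ℕ∞) F ∧ HasCompactSupport F

/-- The uniform (C⁰) norm `‖F‖ = sup_x |F x|`. -/
noncomputable def unif {n : ℕ} (F : Phase n → ℝ) : ℝ := ⨆ x, |F x|

/-- The iterated Poisson bracket `{F₁, {F₂, …, {F_{N−1}, F_N}…}}`, bracketing from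
the right. -/
noncomputable def iterPoisson {n : ℕ} : List (Phase n → ℝ) → Phase n → ℝ
  | [] => fun _ => 0
  | [F] => F
  | F :: G :: rest => poisson F (iterPoisson (G :: rest))

/-! The `N = 2n + 1` functions form a smooth map `Φ = (F_i) : ℝ^{2n} → ℝ^N` whose image is
compact and, as `2n < N`, Lebesgue-null. So some translate of the lattice `β (ℤ^N + 1/2)` misses
it, and by compactness every point of the image is `δ`-far from it in some coordinate. Composing
each `F_i` with a smooth staircase that is `2β`-close to the identity and locally constant away
from its steps, placed on that lattice, gives `F'_i` such that near every point one of them is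
locally constant. A bracket with a locally constant entry vanishes on a neighbourhood, so the
iterated bracket vanishes wherever one of its entries is locally constant. -/

open Set Filter Topology MeasureTheory Module
open scoped ContDiff

section EventuallyConst

variable {X Y : Type*} [TopologicalSpace X] {f : X → Y} {x : X}

lemma Filter.EventuallyConst.eventually_nhds (h : EventuallyConst f (𝓝 x)) :
    ∀ᶠ y in 𝓝 x, EventuallyConst f (𝓝 y) := by
  have : Nonempty Y := ⟨f x⟩
  obtain ⟨c, hc⟩ := eventuallyConst_iff_exists_eventuallyEq.1 h
  exact hc.eventually_nhds.mono fun _ hy => eventuallyConst_iff_exists_eventuallyEq.2 ⟨c, hy⟩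

lemma Filter.EventuallyConst.fderiv_eq_zero {𝕜 E F : Type*} [NontriviallyNormedField 𝕜]
    [NormedAddCommGroup E] [NormedSpace 𝕜 E] [NormedAddCommGroup F] [NormedSpace 𝕜 F]
    {g : E → F} {x : E} (h : EventuallyConst g (𝓝 x)) : fderiv 𝕜 g x = 0 := by
  obtain ⟨c, hc⟩ := eventuallyConst_iff_exists_eventuallyEq.1 h
  rw [hc.fderiv_eq, fderiv_const_apply]

end EventuallyConst

section Poisson

variable {n : ℕ} {F G : Phase n → ℝ} {x : Phase n}

lemma poisson_eq_zero_of_fderiv_left (h : fderiv ℝ F x = 0) : poisson F G x = 0 := by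
  simp [poisson, pderivP, pderivQ, h]

lemma poisson_eq_zero_of_fderiv_right (h : fderiv ℝ G x = 0) : poisson F G x = 0 := by
  simp [poisson, pderivP, pderivQ, h]

lemma poisson_eventuallyEq_zero (h : EventuallyConst F (𝓝 x) ∨ EventuallyConst G (𝓝 x)) :
    poisson F G =ᶠ[𝓝 x] 0 := by
  rcases h with h | h
  · exact h.eventually_nhds.mono fun _ hy => poisson_eq_zero_of_fderiv_left hy.fderiv_eq_zero
  · exact h.eventually_nhds.mono fun _ hy => poisson_eq_zero_of_fderiv_right hy.fderiv_eq_zero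

lemma eventuallyConst_iterPoisson :
    ∀ {L : List (Phase n → ℝ)}, F ∈ L → EventuallyConst F (𝓝 x) →
      EventuallyConst (iterPoisson L) (𝓝 x)
  | [_], hF, h => by rwa [List.mem_singleton.1 hF] at h
  | _ :: H :: rest, hF, h => by
    refine (EventuallyConst.const 0).congr (poisson_eventuallyEq_zero ?_).symm
    rcases List.mem_cons.1 hF with rfl | hrest
    · exact .inl h
    · exact .inr (eventuallyConst_iterPoisson hrest h)

lemma iterPoisson_eq_zero {L : List (Phase n → ℝ)} (hL : 2 ≤ L.length) (hF : F ∈ L)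
    (h : EventuallyConst F (𝓝 x)) : iterPoisson L x = 0 := by
  match L, hL, hF with
  | _ :: H :: rest, _, hF =>
    refine (poisson_eventuallyEq_zero ?_).self_of_nhds
    rcases List.mem_cons.1 hF with rfl | hrest
    · exact .inl h
    · exact .inr (eventuallyConst_iterPoisson hrest h)

end Poisson

section SmoothRound

open Real

noncomputable def smoothStep (δ r : ℝ) : ℝ :=
  smoothTransition ((r - (1 / 2 - δ)) / (2 * δ))

/-- A smoothed `round`: for `0 < δ < 1/2` the jump of `⌊u⌋` at an integer is cancelled by the jump
of `smoothStep δ (fract u)` from `1` to `0`. -/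
noncomputable def smoothRound (δ u : ℝ) : ℝ :=
  ⌊u⌋ + smoothStep δ (Int.fract u)

variable {δ : ℝ}

lemma contDiff_smoothStep : ContDiff ℝ ∞ (smoothStep δ) :=
  smoothTransition.contDiff.comp ((contDiff_id.sub contDiff_const).div_const _)

lemma smoothStep_of_le (hδ : 0 < δ) {r : ℝ} (h : r ≤ 1 / 2 - δ) : smoothStep δ r = 0 :=
  smoothTransition.zero_of_nonpos (div_nonpos_of_nonpos_of_nonneg (by linarith) (by linarith))

lemma smoothStep_of_ge (hδ : 0 < δ) {r : ℝ} (h : 1 / 2 + δ ≤ r) : smoothStep δ r = 1 :=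
  smoothTransition.one_of_one_le ((one_le_div (by linarith)).2 (by linarith))

lemma smoothStep_eventuallyConst (hδ : 0 < δ) {r : ℝ} (h : δ < |r - 1 / 2|) :
    EventuallyConst (smoothStep δ) (𝓝 r) := by
  rcases lt_abs.1 h with h | h
  · exact eventuallyConst_iff_exists_eventuallyEq.2 ⟨1, (eventually_gt_nhds (by linarith)).mono
      fun s hs => smoothStep_of_ge hδ hs.le⟩
  · exact eventuallyConst_iff_exists_eventuallyEq.2 ⟨0, (eventually_lt_nhds (by linarith)).mono
      fun s hs => smoothStep_of_le hδ hs.le⟩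

lemma smoothRound_eq (hδ : 0 < δ) {k : ℤ} {u : ℝ} (hku : k - 1 / 2 + δ ≤ u)
    (huk : u < k + 1) : smoothRound δ u = k + smoothStep δ (u - k) := by
  rcases lt_or_ge u k with hu | hu
  · have hfloor : ⌊u⌋ = k - 1 := Int.floor_eq_iff.2 ⟨by push_cast; linarith, by push_cast; linarith⟩
    rw [smoothRound, ← Int.self_sub_floor, hfloor, smoothStep_of_ge hδ (by push_cast; linarith),
      smoothStep_of_le hδ (by linarith)]
    push_cast
    ring
  · have hfloor : ⌊u⌋ = k := Int.floor_eq_iff.2 ⟨hu, huk⟩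
    rw [smoothRound, ← Int.self_sub_floor, hfloor]

lemma smoothRound_eventuallyEq (hδ : 0 < δ) (hδ' : δ < 1 / 2) (u : ℝ) :
    smoothRound δ =ᶠ[𝓝 u] fun v => ⌊u⌋ + smoothStep δ (v - ⌊u⌋) := by
  have hmem : Ioo ((⌊u⌋ : ℝ) - 1 / 2 + δ) (⌊u⌋ + 1) ∈ 𝓝 u :=
    Ioo_mem_nhds (by linarith [Int.floor_le u]) (Int.lt_floor_add_one u)
  exact Filter.mem_of_superset hmem fun v hv => smoothRound_eq hδ hv.1.le hv.2

lemma contDiff_smoothRound (hδ : 0 < δ) (hδ' : δ < 1 / 2) : ContDiff ℝ ∞ (smoothRound δ) :=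
  contDiff_iff_contDiffAt.2 fun u =>
    (contDiff_const.add (contDiff_smoothStep.comp (contDiff_id.sub contDiff_const))).contDiffAt
      |>.congr_of_eventuallyEq (smoothRound_eventuallyEq hδ hδ' u)

lemma smoothRound_eventuallyConst (hδ : 0 < δ) (hδ' : δ < 1 / 2) {u : ℝ}
    (h : δ < |Int.fract u - 1 / 2|) : EventuallyConst (smoothRound δ) (𝓝 u) := by
  rw [(smoothRound_eventuallyEq hδ hδ' u).eventuallyConst_iff]
  have hstep := smoothStep_eventuallyConst hδ h
  rw [Int.fract] at hstep
  exact (hstep.comp_tendsto ((continuous_sub_right _).tendsto u)).comp (⌊u⌋ + ·)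

lemma abs_smoothRound_sub_le (u : ℝ) : |smoothRound δ u - u| ≤ 1 := by
  have hstep : smoothRound δ u - u = smoothStep δ (Int.fract u) - Int.fract u := by
    rw [smoothRound, Int.fract]
    ring
  have h0 : 0 ≤ smoothStep δ (Int.fract u) := smoothTransition.nonneg _
  have h1 : smoothStep δ (Int.fract u) ≤ 1 := smoothTransition.le_one _
  rw [hstep, abs_le]
  constructor <;> linarith [Int.fract_nonneg u, Int.fract_lt_one u]

end SmoothRound

noncomputable def stair (β c δ t : ℝ) : ℝ :=
  β * (smoothRound δ (t / β + c) - smoothRound δ c)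

section Stair

variable {β c δ : ℝ}

lemma contDiff_stair (hδ : 0 < δ) (hδ' : δ < 1 / 2) : ContDiff ℝ ∞ (stair β c δ) :=
  contDiff_const.mul
    (((contDiff_smoothRound hδ hδ').comp ((contDiff_id.div_const _).add contDiff_const)).sub
      contDiff_const)

lemma stair_zero : stair β c δ 0 = 0 := by
  simp [stair]

lemma abs_stair_sub_le (hβ : 0 < β) (t : ℝ) : |stair β c δ t - t| ≤ 2 * β := by
  have hsplit : stair β c δ t - t =
      β * ((smoothRound δ (t / β + c) - (t / β + c)) - (smoothRound δ c - c)) := by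
    rw [stair]
    field_simp
    ring
  rw [hsplit, abs_mul, abs_of_pos hβ]
  have := abs_sub (smoothRound δ (t / β + c) - (t / β + c)) (smoothRound δ c - c)
  nlinarith [abs_smoothRound_sub_le (δ := δ) (t / β + c), abs_smoothRound_sub_le (δ := δ) c]

lemma stair_eventuallyConst (hδ : 0 < δ) (hδ' : δ < 1 / 2) {t : ℝ}
    (h : δ < |Int.fract (t / β + c) - 1 / 2|) : EventuallyConst (stair β c δ) (𝓝 t) :=
  ((smoothRound_eventuallyConst hδ hδ' h).comp_tendsto
    (((continuous_id.div_const β).add continuous_const).tendsto t)).comp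
    fun s => β * (s - smoothRound δ c)

end Stair

lemma volume_range_eq_zero_of_finrank_lt {E ι : Type*} [NormedAddCommGroup E]
    [NormedSpace ℝ E] [FiniteDimensional ℝ E] [Fintype ι] {Φ : E → ι → ℝ} (hΦ : ContDiff ℝ 1 Φ)
    (hdim : finrank ℝ E < Fintype.card ι) : volume (range Φ) = 0 := by
  have h := hausdorffMeasure_of_dimH_lt (d := Fintype.card ι)
    (hΦ.dimH_range_le.trans_lt (by exact_mod_cast hdim))
  simpa using h

lemma exists_add_notMem_of_measure_zero {G κ : Type*} [MeasurableSpace G] [AddGroup G]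
    [MeasurableAdd G] {μ : Measure G} [μ.IsAddRightInvariant] [NeZero μ] [Countable κ]
    (t : κ → G) {S : Set G} (hS : μ S = 0) : ∃ a, ∀ k, a + t k ∉ S := by
  have hbad : μ (⋃ k, (· + t k) ⁻¹' S) = 0 :=
    measure_iUnion_null fun k => by rwa [measure_preimage_add_right]
  obtain ⟨a, ha⟩ := (measure_eq_zero_iff_ae_notMem.1 hbad).exists
  exact ⟨a, fun k hk => ha (mem_iUnion.2 ⟨k, hk⟩)⟩

/-- A null set misses some translate of the half-integer lattice `β • (ℤ^ι + 1/2)`. -/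
lemma exists_forall_exists_fract_ne {ι : Type*} [Fintype ι] {S : Set (ι → ℝ)}
    (hS : volume S = 0) {β : ℝ} (hβ : β ≠ 0) :
    ∃ c : ι → ℝ, ∀ y ∈ S, ∃ i, Int.fract (y i / β + c i) ≠ 1 / 2 := by
  obtain ⟨a, ha⟩ := exists_add_notMem_of_measure_zero
    (fun k : ι → ℤ => fun i => β * (k i + 1 / 2)) hS
  refine ⟨fun i => -a i / β, fun y hy => ?_⟩
  by_contra! hfract
  refine ha (fun i => ⌊y i / β + -a i / β⌋) ?_
  convert hy using 1
  funext i
  have hlat := Int.floor_add_fract (y i / β + -a i / β)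
  rw [hfract i] at hlat
  rw [Pi.add_apply, hlat]
  field_simp
  ring

lemma exists_forall_exists_lt_abs_fract_sub_half {ι : Type*} [Fintype ι] {K : Set (ι → ℝ)}
    (hK : IsCompact K) (hKlat : ∀ y ∈ K, ∃ i, Int.fract (y i) ≠ 1 / 2) :
    ∃ δ, 0 < δ ∧ δ < 1 / 2 ∧ ∀ y ∈ K, ∃ i, δ < |Int.fract (y i) - 1 / 2| := by
  set D : (ι → ℝ) → ℝ := fun y => ‖fun i => |Int.fract (y i) - 1 / 2|‖
  have hdist : Continuous fun r : ℝ => |Int.fract r - 1 / 2| :=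
    ContinuousOn.comp_fract'' (f := fun r => |r - 1 / 2|) (by fun_prop) (by norm_num)
  have hD : Continuous D := (continuous_pi fun i => hdist.comp (continuous_apply i)).norm
  obtain ⟨δ₀, hδ₀, hδ₀K⟩ := hK.exists_forall_le' hD.continuousOn (a := 0) fun y hy => by
    obtain ⟨i, hi⟩ := hKlat y hy
    refine norm_pos_iff.2 (Function.ne_iff.2 ⟨i, ?_⟩)
    simpa [sub_eq_zero] using hi
  refine ⟨min (δ₀ / 2) (1 / 4), by positivity, by linarith [min_le_right (δ₀ / 2) (1 / 4)],
    fun y hy => ?_⟩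
  by_contra! hsmall
  have : D y ≤ min (δ₀ / 2) (1 / 4) :=
    (pi_norm_le_iff_of_nonneg (by positivity)).2 fun i => by simpa using hsmall i
  linarith [hδ₀K y hy, min_le_left (δ₀ / 2) (1 / 4)]

lemma hasCompactSupport_pi {X ι M : Type*} [TopologicalSpace X] [Finite ι] [Zero M]
    {F : ι → X → M} (hF : ∀ i, HasCompactSupport (F i)) :
    HasCompactSupport fun x i => F i x := by
  refine (isCompact_iUnion hF).of_isClosed_subset (isClosed_tsupport _) (closure_minimal ?_
    (isClosed_iUnion_of_finite fun i => isClosed_tsupport (F i)))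
  intro x hx
  obtain ⟨i, hi⟩ := Function.ne_iff.1 hx
  exact mem_iUnion.2 ⟨i, subset_tsupport _ hi⟩

theorem exists_close_forall_exists_eventuallyConst {E ι : Type*} [NormedAddCommGroup E]
    [NormedSpace ℝ E] [FiniteDimensional ℝ E] [Fintype ι] (hdim : finrank ℝ E < Fintype.card ι)
    {F : ι → E → ℝ} (hF : ∀ i, ContDiff ℝ ∞ (F i)) (hFc : ∀ i, HasCompactSupport (F i))
    {ε : ℝ} (hε : 0 < ε) :
    ∃ F' : ι → E → ℝ,
      (∀ i, ContDiff ℝ ∞ (F' i) ∧ HasCompactSupport (F' i) ∧ ∀ x, |F' i x - F i x| ≤ ε) ∧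
      ∀ x, ∃ i, EventuallyConst (F' i) (𝓝 x) := by
  set β := ε / 2
  have hβ : 0 < β := half_pos hε
  set Φ : E → ι → ℝ := fun x i => F i x
  have hΦ : ContDiff ℝ ∞ Φ := contDiff_pi.2 hF
  obtain ⟨c, hc⟩ := exists_forall_exists_fract_ne
    (volume_range_eq_zero_of_finrank_lt (hΦ.of_le (by norm_cast)) hdim) hβ.ne'
  have hK : IsCompact ((fun y i => y i / β + c i) '' range Φ) :=
    ((hasCompactSupport_pi hFc).isCompact_range hΦ.continuous).image (by fun_prop)
  obtain ⟨δ, hδ, hδ', hδK⟩ := exists_forall_exists_lt_abs_fract_sub_half hK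
    (by rintro _ ⟨_, ⟨x, rfl⟩, rfl⟩; exact hc _ ⟨x, rfl⟩)
  refine ⟨fun i => stair β (c i) δ ∘ F i, fun i => ⟨?_, ?_, ?_⟩, fun x => ?_⟩
  · exact (contDiff_stair hδ hδ').comp (hF i)
  · exact (hFc i).comp_left stair_zero
  · exact fun x => (abs_stair_sub_le hβ _).trans_eq (by ring)
  · obtain ⟨i, hi⟩ := hδK _ ⟨_, ⟨x, rfl⟩, rfl⟩
    exact ⟨i, (stair_eventuallyConst hδ hδ' hi).comp_tendsto ((hF i).continuous.tendsto x)⟩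

/-- **Failure of C⁰-rigidity for multiple brackets.** For every `n ≥ 1` there is an
`N ∈ ℕ`, depending only on `n`, such that any `N` functions in `C_c^∞(ℝ^{2n})` admit
arbitrarily uniformly-close smooth compactly supported perturbations whose iterated
Poisson bracket `{F'_1, {F'_2, …, {F'_{N−1}, F'_N}…}}` vanishes identically. -/
theorem iterated_bracket_flexible (n : ℕ) (hn : 1 ≤ n) :
    ∃ N : ℕ, 1 ≤ N ∧
      ∀ F : Fin N → Phase n → ℝ, (∀ i, SmoothCpt (F i)) →
        ∀ ε > (0 : ℝ), ∃ F' : Fin N → Phase n → ℝ,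
          (∀ i, SmoothCpt (F' i) ∧ unif (fun x => F' i x - F i x) < ε) ∧
          ∀ x, iterPoisson (List.ofFn F') x = 0 := by
  refine ⟨n + n + 1, by omega, fun F hF ε hε => ?_⟩
  have hdim : finrank ℝ (Phase n) < Fintype.card (Fin (n + n + 1)) := by simp
  obtain ⟨F', hF', hconst⟩ := exists_close_forall_exists_eventuallyConst hdim
    (fun i => (hF i).1) (fun i => (hF i).2) (half_pos hε)
  refine ⟨F', fun i => ⟨⟨(hF' i).1, (hF' i).2.1⟩, ?_⟩, fun x => ?_⟩
  · exact (Real.iSup_le (hF' i).2.2 (half_pos hε).le).trans_lt (half_lt_self hε)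
  · obtain ⟨i, hi⟩ := hconst x
    exact iterPoisson_eq_zero (by rw [List.length_ofFn]; omega) (List.mem_ofFn.2 ⟨i, rfl⟩) hi
end

section
/- Let F, G ∈ C_c^∞(ℝ^{2n}) with Hamiltonian flows (f_s)_{s∈ℝ} and (g_t)_{t∈ℝ}, and for s,t ∈ ℝ, τ ∈ [0,1], x ∈ ℝ^{2n} set L_{s,t}(x,τ) := s·F(x) − s·F(g_t^{−1}(f_{τs}^{−1}(x))). Then for every fixed x ∈ ℝ^{2n} and τ ∈ [0,1], the function (s,t) ↦ L_{s,t}(x,τ) vanishes identically on the lines s = 0 and t = 0, and its mixed second partial derivative at (s,t) = (0,0) equals {F, G}(x): ∂²/∂s∂t |_{(0,0)} L_{s,t}(x,τ) = {F, G}(x). -/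
/-- The Hamiltonian vector field `X_H = (−∂H/∂q, ∂H/∂p)`. -/
noncomputable def hamVF {n : ℕ} (H : Phase n → ℝ) (x : Phase n) : Phase n :=
  (fun i => -(pderivQ H i x), fun i => pderivP H i x)

/-- `ψ` is the Hamiltonian flow of `H`: `ψ^0 = id`, the group (flow) law holds, and
`(d/dt) ψ^t x = X_H (ψ^t x)`. -/
def IsHamFlow {n : ℕ} (H : Phase n → ℝ) (ψ : ℝ → Phase n → Phase n) : Prop :=
  (∀ x, ψ 0 x = x) ∧ (∀ s t x, ψ (s + t) x = ψ s (ψ t x)) ∧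
  (∀ x t, HasDerivAt (fun s => ψ s x) (hamVF H (ψ t x)) t)

/-!
Since `F` is conserved by its own flow, `L` vanishes on `t = 0`, and it vanishes on `s = 0`
because of the factor `s`. Differentiating in `t` at `t = 0` gives
`∂_t L_{s,0} = s · {F,G}(f_{-τs} x)`, a function of `s` of the form `s · Φ(s)` with `Φ`
continuous, whose derivative at `0` is `Φ(0) = {F,G}(x)`.
-/

open Topology Asymptotics

theorem hasDerivAt_smul_self_of_continuousAt {𝕜 E : Type*} [NontriviallyNormedField 𝕜]
    [NormedAddCommGroup E] [NormedSpace 𝕜 E] {Φ : 𝕜 → E} (h : ContinuousAt Φ 0) :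
    HasDerivAt (fun s => s • Φ s) (Φ 0) 0 := by
  rw [hasDerivAt_iff_isLittleO_nhds_zero]
  have hΦ : (fun s : 𝕜 => Φ s - Φ 0) =o[𝓝 0] (fun _ => (1 : 𝕜)) := by
    rw [isLittleO_one_iff]
    exact tendsto_sub_nhds_zero_iff.mpr h
  simpa [smul_sub] using (isBigO_refl (fun s : 𝕜 => s) (𝓝 0)).smul_isLittleO hΦ

theorem phase_clm_apply_eq_sum {n : ℕ} (L : Phase n →L[ℝ] ℝ) (v : Phase n) :
    L v = ∑ i, (v.1 i * L (Pi.single i 1, 0) + v.2 i * L (0, Pi.single i 1)) := by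
  have hv : v = ∑ i, (v.1 i • ((Pi.single i 1 : Fin n → ℝ), (0 : Fin n → ℝ))
      + v.2 i • ((0 : Fin n → ℝ), (Pi.single i 1 : Fin n → ℝ))) := by
    apply Prod.ext <;>
      simp [Prod.fst_sum, Prod.snd_sum, ← Pi.single_smul, Finset.univ_sum_single]
  conv_lhs => rw [hv]
  simp only [map_sum, map_add, map_smul, smul_eq_mul]

theorem fderiv_apply_hamVF {n : ℕ} (F G : Phase n → ℝ) (y : Phase n) :
    fderiv ℝ F y (hamVF G y) = poisson F G y := by
  rw [phase_clm_apply_eq_sum, poisson]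
  exact Finset.sum_congr rfl fun i _ => by simp only [hamVF, pderivP, pderivQ]; ring

theorem poisson_self {n : ℕ} (F : Phase n → ℝ) (y : Phase n) : poisson F F y = 0 :=
  Finset.sum_eq_zero fun _ _ => by ring

theorem continuous_poisson {n : ℕ} {F G : Phase n → ℝ}
    (hF : ContDiff ℝ 1 F) (hG : ContDiff ℝ 1 G) : Continuous (poisson F G) := by
  have hF' := hF.continuous_fderiv one_ne_zero
  have hG' := hG.continuous_fderiv one_ne_zero
  unfold poisson pderivP pderivQ
  fun_prop

namespace IsHamFlow

variable {n : ℕ} {H : Phase n → ℝ} {ψ : ℝ → Phase n → Phase n}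

theorem continuous_apply (hψ : IsHamFlow H ψ) (y : Phase n) : Continuous fun t => ψ t y :=
  continuous_iff_continuousAt.mpr fun t => (hψ.2.2 y t).continuousAt

theorem hasDerivAt_comp {F : Phase n → ℝ} (hψ : IsHamFlow H ψ) (y : Phase n) (t : ℝ)
    (hF : DifferentiableAt ℝ F (ψ t y)) :
    HasDerivAt (fun t => F (ψ t y)) (poisson F H (ψ t y)) t := by
  simpa [Function.comp_def, fderiv_apply_hamVF] using
    hF.hasFDerivAt.comp_hasDerivAt t (hψ.2.2 y t)

theorem hasDerivAt_comp_neg_zero {F : Phase n → ℝ} (hψ : IsHamFlow H ψ) (y : Phase n)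
    (hF : DifferentiableAt ℝ F y) :
    HasDerivAt (fun t => F (ψ (-t) y)) (-poisson F H y) 0 := by
  have h := (hψ.hasDerivAt_comp y (-0) (by simpa [hψ.1] using hF)).scomp (0 : ℝ)
    (hasDerivAt_neg 0)
  simpa [Function.comp_def, hψ.1] using h

theorem apply_eq_of_differentiable (hψ : IsHamFlow H ψ) (hH : Differentiable ℝ H)
    (y : Phase n) (t : ℝ) : H (ψ t y) = H y := by
  have hd : ∀ u, HasDerivAt (fun u => H (ψ u y)) 0 u := fun u => by
    simpa [poisson_self] using hψ.hasDerivAt_comp y u (hH _)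
  simpa [hψ.1] using is_const_of_deriv_eq_zero (fun u => (hd u).differentiableAt)
    (fun u => (hd u).deriv) t 0

end IsHamFlow

theorem mixed_partial_L_eq_poisson_general (n : ℕ) (F G : Phase n → ℝ)
    (hF : SmoothCpt F) (hG : SmoothCpt G)
    (f g : ℝ → Phase n → Phase n)
    (hf : IsHamFlow F f) (hg : IsHamFlow G g)
    (x : Phase n) (τ : ℝ) :
    (∀ t : ℝ, (0 : ℝ) * F x - 0 * F (g (-t) (f (-(τ * 0)) x)) = 0) ∧
    (∀ s : ℝ, s * F x - s * F (g (-(0 : ℝ)) (f (-(τ * s)) x)) = 0) ∧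
    deriv (fun s : ℝ =>
        deriv (fun t : ℝ => s * F x - s * F (g (-t) (f (-(τ * s)) x))) 0) 0
      = poisson F G x := by
  have hF1 : ContDiff ℝ 1 F := hF.1.of_le (by simp)
  have hFd : Differentiable ℝ F := hF1.differentiable one_ne_zero
  refine ⟨fun t => by ring, fun s => ?_, ?_⟩
  · rw [neg_zero, hg.1, hf.apply_eq_of_differentiable hFd]
    ring
  have hinner : ∀ s : ℝ,
      deriv (fun t : ℝ => s * F x - s * F (g (-t) (f (-(τ * s)) x))) 0
        = s * poisson F G (f (-(τ * s)) x) := fun s => by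
    rw [(((hg.hasDerivAt_comp_neg_zero _ (hFd _)).const_mul s).const_sub (s * F x)).deriv]
    ring
  have hΦ : Continuous fun s : ℝ => poisson F G (f (-(τ * s)) x) :=
    (continuous_poisson hF1 (hG.1.of_le (by simp))).comp
      ((hf.continuous_apply x).comp (by fun_prop))
  rw [funext hinner]
  simpa [hf.1] using (hasDerivAt_smul_self_of_continuousAt hΦ.continuousAt).deriv

/-- With `L_{s,t}(x,τ) = s·F(x) − s·F(g_t^{−1}(f_{τs}^{−1}(x)))`: for fixed `x` and
`τ ∈ [0,1]`, the function `(s,t) ↦ L_{s,t}(x,τ)` vanishes on the lines `s = 0` and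
`t = 0`, and its mixed second partial derivative `∂²/∂s∂t` at `(0,0)` equals
`{F,G}(x)`. Here `f_s = ψ_F^s`, `g_t = ψ_G^t`. -/
theorem mixed_partial_L_eq_poisson (n : ℕ) (F G : Phase n → ℝ)
    (hF : SmoothCpt F) (hG : SmoothCpt G)
    (f g : ℝ → Phase n → Phase n)
    (hf : IsHamFlow F f) (hg : IsHamFlow G g)
    (x : Phase n) (τ : ℝ) (hτ : τ ∈ Set.Icc (0 : ℝ) 1) :
    (∀ t : ℝ, (0 : ℝ) * F x - 0 * F (g (-t) (f (-(τ * 0)) x)) = 0) ∧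
    (∀ s : ℝ, s * F x - s * F (g (-(0 : ℝ)) (f (-(τ * s)) x)) = 0) ∧
    deriv (fun s : ℝ =>
        deriv (fun t : ℝ => s * F x - s * F (g (-t) (f (-(τ * s)) x))) 0) 0
      = poisson F G x :=
  mixed_partial_L_eq_poisson_general n F G hF hG f g hf hg x τ
end
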